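/- Let λ > 0 be real, let m be a positive integer with 2mλ ≥ √3. Then the tail sum J_{[m,∞)} = ∑_{j=m}^{∞} v(j,λ) satisfies the two-sided sandwich: v(m,λ) + (m+1)·exp(−2(m+1)²λ²) ≤ J_{[m,∞)} ≤ v(m,λ) + m·exp(−2m²λ²), where v(r,λ) = (4r²λ² − 1)·exp(−2r²λ²). -/

import Mathlib

/-!
For `r ≥ m` we have `4r²λ² ≥ 3`, so `v(·,λ)` is nonnegative and nonincreasing there (its derivative
is `4rλ²(3 − 4r²λ²)e^{−2r²λ²}`), and `r e^{−2r²λ²}` is its tail integral `∫_r^∞ v(t,λ) dt`.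
The integral test then squeezes `∑_{j ≥ 1} v(m + j, λ)` between `∫_{m+1}^∞ v` and `∫_m^∞ v`.
-/

/-- `v(r,λ) = (4r²λ² - 1)·exp(-2r²λ²)`. -/
noncomputable def v (r l : ℝ) : ℝ := (4 * r ^ 2 * l ^ 2 - 1) * Real.exp (-2 * r ^ 2 * l ^ 2)

open Real Set Filter Topology

theorem AntitoneOn.nonneg_of_tendsto_atTop_zero {G : ℝ → ℝ} {a x : ℝ} (anti : AntitoneOn G (Ici a))
    (hG_tendsto : Tendsto G atTop (𝓝 0)) (hx : a ≤ x) : 0 ≤ G x :=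
  le_of_tendsto hG_tendsto <| (eventually_ge_atTop x).mono fun _ hy => anti hx (hx.trans hy) hy

theorem AntitoneOn.tsum_comp_add_mem_Icc {f G : ℝ → ℝ} {a : ℝ} (anti : AntitoneOn f (Ici a))
    (nonneg : ∀ x ∈ Ici a, 0 ≤ f x) (hG : ∀ x ∈ Ici a, HasDerivAt G (-f x) x)
    (hG_tendsto : Tendsto G atTop (𝓝 0)) :
    ∑' n : ℕ, f (a + n) ∈ Icc (f a + G (a + 1)) (f a + G a) := by
  have integral_eq (x : ℝ) (hx : a ≤ x) (N : ℕ) : ∫ t in x..x + N, f t = G x - G (x + N) := by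
    have hsub : uIcc x (x + N) ⊆ Ici a := by
      rw [uIcc_of_le (by simp)]; exact fun t ht => hx.trans ht.1
    rw [intervalIntegral.integral_eq_sub_of_hasDerivAt (f := fun t => -G t)
      (fun t ht => (hG t (hsub ht)).neg.congr_deriv (neg_neg _))
      ((anti.mono hsub).intervalIntegrable)]
    ring
  have G_anti : AntitoneOn G (Ici a) :=
    antitoneOn_of_hasDerivWithinAt_nonpos (convex_Ici a)
      (fun y hy => (hG y hy).continuousAt.continuousWithinAt)
      (fun y hy => (hG y (interior_subset hy)).hasDerivWithinAt)
      (fun y hy => neg_nonpos.2 (nonneg y (interior_subset hy)))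
  have G_nonneg (N : ℕ) : 0 ≤ G (a + N) :=
    G_anti.nonneg_of_tendsto_atTop_zero hG_tendsto (by simp)
  have anti_from (x : ℝ) (hx : a ≤ x) (N : ℕ) : AntitoneOn f (Icc x (x + N)) :=
    anti.mono fun t ht => hx.trans ht.1
  have sum_le (N : ℕ) : ∑ i ∈ Finset.range N, f (a + (i + 1 : ℕ)) ≤ G a - G (a + N) :=
    (integral_eq a le_rfl N) ▸ (anti_from a le_rfl N).sum_le_integral
  have le_sum (N : ℕ) : G (a + 1) - G (a + 1 + N) ≤ ∑ i ∈ Finset.range N, f (a + (i + 1 : ℕ)) := by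
    rw [← integral_eq (a + 1) (by linarith) N]
    convert (anti_from (a + 1) (by linarith) N).integral_le_sum using 3
    push_cast; ring
  have summable : Summable fun i : ℕ => f (a + (i + 1 : ℕ)) :=
    summable_of_sum_range_le (fun i => nonneg _ (by simp; positivity))
      fun N => (sum_le N).trans (sub_le_self _ (G_nonneg N))
  have lower : G (a + 1) ≤ ∑' i : ℕ, f (a + (i + 1 : ℕ)) := by
    have hG_shift : Tendsto (fun N : ℕ => G (a + 1 + N)) atTop (𝓝 0) :=
      hG_tendsto.comp (tendsto_atTop_add_const_left _ _ tendsto_natCast_atTop_atTop)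
    simpa using le_of_tendsto_of_tendsto' (tendsto_const_nhds.sub hG_shift)
      summable.hasSum.tendsto_sum_nat le_sum
  have upper : ∑' i : ℕ, f (a + (i + 1 : ℕ)) ≤ G a :=
    summable.tsum_le_of_sum_range_le fun N => (sum_le N).trans (sub_le_self _ (G_nonneg N))
  have summable_all : Summable fun n : ℕ => f (a + n) :=
    (summable_nat_add_iff (f := fun n : ℕ => f (a + n)) 1).1 summable
  rw [summable_all.tsum_eq_zero_add]
  simp only [Nat.cast_zero, add_zero]
  exact ⟨by linarith, by linarith⟩

noncomputable def vTail (r l : ℝ) : ℝ := r * exp (-2 * r ^ 2 * l ^ 2)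

theorem hasDerivAt_exp_neg_two_sq_mul_sq (l x : ℝ) :
    HasDerivAt (fun y => exp (-2 * y ^ 2 * l ^ 2))
      (-4 * x * l ^ 2 * exp (-2 * x ^ 2 * l ^ 2)) x := by
  convert (((hasDerivAt_pow 2 x).const_mul (-2)).mul_const (l ^ 2)).exp using 1
  push_cast; ring

theorem hasDerivAt_vTail (l x : ℝ) : HasDerivAt (vTail · l) (-v x l) x := by
  refine ((hasDerivAt_id x).mul (hasDerivAt_exp_neg_two_sq_mul_sq l x)).congr_deriv ?_
  simp only [v, id]; ring

theorem hasDerivAt_v (l x : ℝ) :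
    HasDerivAt (v · l) (4 * x * l ^ 2 * (3 - 4 * x ^ 2 * l ^ 2) * exp (-2 * x ^ 2 * l ^ 2)) x := by
  refine (((((hasDerivAt_pow 2 x).const_mul 4).mul_const (l ^ 2)).sub_const 1).mul
    (hasDerivAt_exp_neg_two_sq_mul_sq l x)).congr_deriv ?_
  push_cast; ring

theorem v_nonneg {r l : ℝ} (h : 1 ≤ 4 * r ^ 2 * l ^ 2) : 0 ≤ v r l :=
  mul_nonneg (by linarith) (exp_pos _).le

theorem antitoneOn_v {a l : ℝ} (ha : 0 ≤ a) (h : 3 ≤ 4 * a ^ 2 * l ^ 2) :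
    AntitoneOn (v · l) (Ici a) := by
  refine antitoneOn_of_hasDerivWithinAt_nonpos (convex_Ici a)
    (fun x _ => (hasDerivAt_v l x).continuousAt.continuousWithinAt)
    (fun x _ => (hasDerivAt_v l x).hasDerivWithinAt) fun x hx => ?_
  rw [interior_Ici] at hx
  have hx3 : 3 ≤ 4 * x ^ 2 * l ^ 2 := h.trans (by gcongr; exact hx.le)
  have hx0 : 0 ≤ x := ha.trans hx.le
  exact mul_nonpos_of_nonpos_of_nonneg
    (mul_nonpos_of_nonneg_of_nonpos (by positivity) (by linarith)) (exp_pos _).le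

theorem tendsto_vTail_atTop {l : ℝ} (hl : l ≠ 0) : Tendsto (vTail · l) atTop (𝓝 0) := by
  refine ((tendsto_rpow_abs_mul_exp_neg_mul_sq_cocompact (a := 2 * l ^ 2) (by positivity) 1
    ).mono_left atTop_le_cocompact).congr' ?_
  filter_upwards [eventually_ge_atTop 0] with x hx
  rw [abs_of_nonneg hx, rpow_one, vTail]; ring_nf

theorem stmt_17_general (l : ℝ) (hl : 0 < l) (m : ℕ)
    (h : Real.sqrt 3 ≤ 2 * m * l) :
    v m l + ((m : ℝ) + 1) * Real.exp (-2 * ((m : ℝ) + 1) ^ 2 * l ^ 2)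
      ≤ (∑' j : ℕ, v ((m : ℝ) + j) l) ∧
    (∑' j : ℕ, v ((m : ℝ) + j) l) ≤ v m l + m * Real.exp (-2 * (m : ℝ) ^ 2 * l ^ 2) := by
  have h3 : 3 ≤ 4 * (m : ℝ) ^ 2 * l ^ 2 := by
    have := pow_le_pow_left₀ (sqrt_nonneg 3) h 2
    rw [sq_sqrt (by norm_num)] at this
    linarith
  exact (antitoneOn_v (Nat.cast_nonneg m) h3).tsum_comp_add_mem_Icc
    (fun x hx => v_nonneg ((h3.trans (by gcongr; exact hx)).trans' (by norm_num)))
    (fun x _ => hasDerivAt_vTail l x) (tendsto_vTail_atTop hl.ne')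

/-- Tail sandwich: for `λ > 0` and a positive integer `m` with `2mλ ≥ √3`, the tail sum
`J_{[m,∞)} = ∑_{j=m}^∞ v(j,λ)` satisfies
`v(m,λ) + (m+1)·exp(-2(m+1)²λ²) ≤ J_{[m,∞)} ≤ v(m,λ) + m·exp(-2m²λ²)`. -/
theorem stmt_17 (l : ℝ) (hl : 0 < l) (m : ℕ) (hm : 0 < m)
    (h : Real.sqrt 3 ≤ 2 * m * l) :
    v m l + ((m : ℝ) + 1) * Real.exp (-2 * ((m : ℝ) + 1) ^ 2 * l ^ 2)
      ≤ (∑' j : ℕ, v ((m : ℝ) + j) l) ∧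
    (∑' j : ℕ, v ((m : ℝ) + j) l) ≤ v m l + m * Real.exp (-2 * (m : ℝ) ^ 2 * l ^ 2) :=
  stmt_17_general l hl m h
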